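/- arXiv:math/0205318 — 2 statements merged into one kernel-verified Lean document; each statement's English description precedes it below -/
import Mathlib

section
/- Define F(y₁,y₂,y₃) = 2(y₁⁶+y₂⁶+y₃⁶) + (1/16)[(y₁+y₂+y₃)⁶ + (y₁+y₂−y₃)⁶ + (y₁−y₂+y₃)⁶ + (y₁−y₂−y₃)⁶]. There are no real constants c₁, c₂ such that F(y) = c₁(y₁²+y₂²+y₃²)³ + c₂(y₁²+y₂²+y₃²)(y₁⁴+y₂⁴+y₃⁴) holds for all real y₁, y₂, y₃. -/
theorem statement10 :
    ¬ ∃ c₁ c₂ : ℝ, ∀ y₁ y₂ y₃ : ℝ,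
      2 * (y₁ ^ 6 + y₂ ^ 6 + y₃ ^ 6)
        + (1 / 16) * ((y₁ + y₂ + y₃) ^ 6 + (y₁ + y₂ - y₃) ^ 6
            + (y₁ - y₂ + y₃) ^ 6 + (y₁ - y₂ - y₃) ^ 6)
        = c₁ * (y₁ ^ 2 + y₂ ^ 2 + y₃ ^ 2) ^ 3
          + c₂ * (y₁ ^ 2 + y₂ ^ 2 + y₃ ^ 2) * (y₁ ^ 4 + y₂ ^ 4 + y₃ ^ 4) := by
  rintro ⟨c₁, c₂, h⟩
  have h1 := h 1 0 0
  have h2 := h 1 1 0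
  have h3 := h 1 1 1
  norm_num at h1 h2 h3
  linarith
end

section
/- Let n ≥ 2 and a ≥ 2 be integers, and let y₁,…,y_n be real numbers with ∑_{i=1}^n y_i = 0. Writing p_s = ∑_{i=1}^n y_i^s, one has ∑_{1≤i<j≤n} (y_i + y_j)^a = (n − 2^{a−1}) p_a + (1/2) ∑_{s=2}^{a−2} C(a,s) p_{a−s} p_s, where C(a,s) denotes the binomial coefficient. -/
/-!
Split the full double sum `∑ᵢ ∑ⱼ (yᵢ + yⱼ)^a` into the two (equal) off-diagonal halves and the
diagonal `2^a p_a`. On the other hand the binomial theorem factors it as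
`∑ₛ C(a,s) p_{a-s} p_s`, whose terms `s = 0, a` are `n p_a` each and whose terms `s = 1, a - 1`
vanish because `p₁ = ∑ yᵢ = 0`.
-/

open Finset

theorem Finset.sum_sum_add_pow {ι R : Type*} [Fintype ι] [CommSemiring R] (f : ι → R) (a : ℕ) :
    ∑ i, ∑ j, (f i + f j) ^ a
      = ∑ s ∈ range (a + 1), (a.choose s : R) * (∑ i, f i ^ (a - s)) * ∑ i, f i ^ s := by
  simp_rw [mul_assoc, sum_mul_sum, mul_sum, add_pow]
  rw [sum_comm]
  conv_rhs => rw [sum_comm]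
  refine sum_congr rfl fun j _ => ?_
  conv_rhs => rw [sum_comm]
  exact sum_congr rfl fun i _ => sum_congr rfl fun s _ => by ring

theorem Finset.sum_sum_eq_sum_lt_add_sum_lt_add_sum_diag {ι M : Type*} [Fintype ι] [LinearOrder ι]
    [AddCommMonoid M] (g : ι → ι → M) (hg : ∀ i j, g i j = g j i) :
    ∑ i, ∑ j, g i j
      = (∑ i, ∑ j, if i < j then g i j else 0) + (∑ i, ∑ j, if i < j then g i j else 0)
        + ∑ i, g i i := by
  have hsplit : ∀ i j, g i j = ((if i < j then g i j else 0) + if j < i then g j i else 0)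
      + if i = j then g i j else 0 := by
    intro i j
    rcases lt_trichotomy i j with h | rfl | h
    · simp [h, h.ne, h.not_gt]
    · simp
    · simp [h, h.ne', h.not_gt, hg i j]
  conv_lhs => enter [2, i, 2, j]; rw [hsplit i j]
  simp only [sum_add_distrib, sum_ite_eq, mem_univ, if_true]
  rw [sum_comm (f := fun i j => if j < i then g j i else 0)]

theorem Finset.sum_range_succ_eq_add_sum_Icc_of_eq_zero {M : Type*} [AddCommMonoid M] (F : ℕ → M) {a : ℕ}
    (ha : 2 ≤ a) (h1 : F 1 = 0) (ha1 : F (a - 1) = 0) :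
    ∑ s ∈ range (a + 1), F s = F 0 + F a + ∑ s ∈ Icc 2 (a - 2), F s := by
  have hsub : insert 0 (insert a (Icc 2 (a - 2))) ⊆ range (a + 1) := by
    intro s hs
    simp only [mem_insert, mem_Icc, mem_range] at hs ⊢
    omega
  rw [← sum_subset hsub, sum_insert (by simp only [mem_insert, mem_Icc]; omega),
    sum_insert (by simp only [mem_Icc]; omega), add_assoc]
  intro s hs hs'
  simp only [mem_range, mem_insert, mem_Icc] at hs hs'
  obtain rfl | rfl : s = 1 ∨ s = a - 1 := by omega
  exacts [h1, ha1]

theorem statement11_general (n a : ℕ) (ha : 2 ≤ a)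
    (y : Fin n → ℝ) (hsum : ∑ i, y i = 0) :
    (∑ i : Fin n, ∑ j : Fin n, if i < j then (y i + y j) ^ a else 0)
      = ((n : ℝ) - 2 ^ (a - 1)) * (∑ i, (y i) ^ a)
        + (1 / 2) * ∑ s ∈ Finset.Icc 2 (a - 2),
            (a.choose s : ℝ) * (∑ i, (y i) ^ (a - s)) * (∑ i, (y i) ^ s) := by
  set p : ℕ → ℝ := fun s => ∑ i, y i ^ s
  have hp0 : p 0 = n := by simp [p]
  have hp1 : p 1 = 0 := by simpa [p] using hsum
  have hsymm := sum_sum_eq_sum_lt_add_sum_lt_add_sum_diag (fun i j => (y i + y j) ^ a)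
    fun i j => by rw [add_comm]
  have hsplit := sum_range_succ_eq_add_sum_Icc_of_eq_zero (fun s => (a.choose s : ℝ) * p (a - s) * p s) ha
    (by simp [hp1]) (by simp [hp1, Nat.sub_sub_self (by omega : 1 ≤ a)])
  rw [← sum_sum_add_pow, hsymm] at hsplit
  simp only [← two_mul, mul_pow, ← mul_sum, Nat.choose_zero_right, Nat.choose_self, Nat.sub_zero,
    Nat.sub_self, hp0] at hsplit
  have hpow : (2 : ℝ) ^ a = 2 * 2 ^ (a - 1) := by rw [← pow_succ', Nat.sub_add_cancel (by omega)]
  linear_combination hsplit / 2 - p a / 2 * hpow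

theorem statement11 (n a : ℕ) (hn : 2 ≤ n) (ha : 2 ≤ a)
    (y : Fin n → ℝ) (hsum : ∑ i, y i = 0) :
    (∑ i : Fin n, ∑ j : Fin n, if i < j then (y i + y j) ^ a else 0)
      = ((n : ℝ) - 2 ^ (a - 1)) * (∑ i, (y i) ^ a)
        + (1 / 2) * ∑ s ∈ Finset.Icc 2 (a - 2),
            (a.choose s : ℝ) * (∑ i, (y i) ^ (a - s)) * (∑ i, (y i) ^ s) :=
  statement11_general n a ha y hsum
end
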